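/- Let D be a canonical DBM over n clocks with D i i = 0 for all i and ⟦D⟧ ≠ ∅, and let S ⊆ Fin (n+1) with 0 ∉ S. Then the zone of the reset matrix D[S := 0] is exactly the image of the zone of D under resetting the clocks in S to zero: ⟦D[S := 0]⟧ = {v[S := 0] | v ∈ ⟦D⟧}. -/

import Mathlib

open scoped Classical

/-- A DBM over `n` clocks: index `0` is the reference clock. -/
abbrev DBM (n : ℕ) := Fin (n + 1) → Fin (n + 1) → WithTop ℝ

/-- The zone of a DBM. -/
def Zone {n : ℕ} (D : DBM n) : Set (Fin (n + 1) → ℝ) :=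
  {v | v 0 = 0 ∧ ∀ i j, ((v i - v j : ℝ) : WithTop ℝ) ≤ D i j}

/-- A DBM is canonical if it satisfies the triangle inequality. -/
def Canonical {n : ℕ} (D : DBM n) : Prop :=
  ∀ i j k, D i j ≤ D i k + D k j

/-- The reset matrix `D[S := 0]`. -/
noncomputable def resetDBM {n : ℕ} (D : DBM n) (S : Set (Fin (n + 1))) : DBM n := fun j k =>
  if j ∈ S then (if k ∈ S then 0 else D 0 k)
  else (if k ∈ S then D j 0 else D j k)

/-- The valuation `v[S := 0]`: zero on coordinates in `S`, `v` elsewhere. -/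
noncomputable def resetVal {n : ℕ} (S : Set (Fin (n + 1))) (v : Fin (n + 1) → ℝ) :
    Fin (n + 1) → ℝ := fun i => if i ∈ S then 0 else v i

/-!
Points of `⟦D[S := 0]⟧` are zero on `S` and satisfy the constraints of `D` among the clocks
outside `S`, so the inclusion `⊆` is an extension problem. For a canonical `D` with zero diagonal,
the min-plus product `i ↦ min_j (t j + D i j)` is a solution of `D` for every `t`, and it agrees
with `t` at every clock `j` whose row of constraints `t` already satisfies. Starting from a
solution `w` shifted above `u` and replacing it by `u` outside `S`, every row outside `S` is
satisfied, so the min-plus product of this valuation extends `u`.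
-/

theorem WithTop.coe_sub_le_iff {α : Type*} [AddCommGroup α] [LinearOrder α]
    [IsOrderedAddMonoid α] {a b : α} {c : WithTop α} :
    ((a - b : α) : WithTop α) ≤ c ↔ (a : WithTop α) ≤ b + c := by
  induction c using WithTop.recTopCoe with
  | top => simp
  | coe c =>
    rw [← WithTop.coe_add, WithTop.coe_le_coe, WithTop.coe_le_coe]
    exact sub_le_iff_le_add'

namespace DBM

variable {n : ℕ} (D : DBM n)

def Satisfies (v : Fin (n + 1) → ℝ) : Prop :=
  ∀ i j, (v i : WithTop ℝ) ≤ v j + D i j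

theorem mem_zone_iff {v : Fin (n + 1) → ℝ} : v ∈ Zone D ↔ v 0 = 0 ∧ D.Satisfies v := by
  simp only [Zone, Satisfies, Set.mem_ofPred_eq, WithTop.coe_sub_le_iff]

theorem satisfies_add_const {v : Fin (n + 1) → ℝ} (hv : D.Satisfies v) (c : ℝ) :
    D.Satisfies (v + fun _ => c) := by
  intro i j
  rw [Pi.add_apply, Pi.add_apply, WithTop.coe_add, WithTop.coe_add, add_right_comm]
  gcongr
  exact hv i j

noncomputable def minPlus (t : Fin (n + 1) → ℝ) (i : Fin (n + 1)) : WithTop ℝ :=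
  Finset.univ.inf' Finset.univ_nonempty fun j => (t j : WithTop ℝ) + D i j

variable {D}

theorem minPlus_le (t : Fin (n + 1) → ℝ) (i j : Fin (n + 1)) :
    D.minPlus t i ≤ t j + D i j :=
  Finset.inf'_le _ (Finset.mem_univ j)

theorem minPlus_le_add_minPlus (hD : Canonical D) (t : Fin (n + 1) → ℝ) (i k : Fin (n + 1)) :
    D.minPlus t i ≤ D.minPlus t k + D i k := by
  obtain ⟨j, -, hj⟩ := Finset.exists_mem_eq_inf' Finset.univ_nonempty
    fun j => (t j : WithTop ℝ) + D k j
  calc D.minPlus t i ≤ t j + D i j := minPlus_le t i j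
    _ ≤ t j + (D k j + D i k) := add_le_add_right ((hD i j k).trans_eq (add_comm _ _)) _
    _ = D.minPlus t k + D i k := by rw [minPlus, hj, add_assoc]

theorem minPlus_eq_of_forall_le (hdiag : ∀ i, D i i = 0) {t : Fin (n + 1) → ℝ}
    {j : Fin (n + 1)} (ht : ∀ k, (t j : WithTop ℝ) ≤ t k + D j k) : D.minPlus t j = t j :=
  le_antisymm (by simpa [hdiag j] using minPlus_le (D := D) t j j)
    (Finset.le_inf' _ _ fun k _ => ht k)

theorem minPlus_ne_top (hdiag : ∀ i, D i i = 0) (t : Fin (n + 1) → ℝ) (i : Fin (n + 1)) :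
    D.minPlus t i ≠ ⊤ :=
  ne_top_of_le_ne_top (by simp [hdiag i]) (minPlus_le t i i)

theorem exists_satisfies_eq_of_forall_le (hD : Canonical D) (hdiag : ∀ i, D i i = 0)
    (t : Fin (n + 1) → ℝ) :
    ∃ v, D.Satisfies v ∧ ∀ j, (∀ k, (t j : WithTop ℝ) ≤ t k + D j k) → v j = t j := by
  refine ⟨fun i => (D.minPlus t i).untop (minPlus_ne_top hdiag t i), ?_, fun j hj => ?_⟩
  · intro i k
    simpa only [WithTop.coe_untop] using minPlus_le_add_minPlus hD t i k
  · simp only [minPlus_eq_of_forall_le hdiag hj, WithTop.untop_coe]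

theorem exists_satisfies_ge (hD : Canonical D) (hdiag : ∀ i, D i i = 0)
    (u : Fin (n + 1) → ℝ) : ∃ w, D.Satisfies w ∧ u ≤ w := by
  obtain ⟨w, hw, -⟩ := exists_satisfies_eq_of_forall_le hD hdiag 0
  let c := Finset.univ.sup' Finset.univ_nonempty fun j => u j - w j
  refine ⟨w + fun _ => c, D.satisfies_add_const hw c, fun j => ?_⟩
  have : u j - w j ≤ c := Finset.le_sup' (fun j => u j - w j) (Finset.mem_univ j)
  simp only [Pi.add_apply]
  linarith

theorem exists_satisfies_eqOn_compl (hD : Canonical D) (hdiag : ∀ i, D i i = 0)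
    {S : Set (Fin (n + 1))} {u : Fin (n + 1) → ℝ}
    (hu : ∀ j ∉ S, ∀ k ∉ S, (u j : WithTop ℝ) ≤ u k + D j k) :
    ∃ v, D.Satisfies v ∧ ∀ j ∉ S, v j = u j := by
  obtain ⟨w, hw, huw⟩ := exists_satisfies_ge hD hdiag u
  obtain ⟨v, hv, hvt⟩ := exists_satisfies_eq_of_forall_le hD hdiag (S.piecewise w u)
  refine ⟨v, hv, fun j hj => ?_⟩
  have hrow : ∀ k, (S.piecewise w u j : WithTop ℝ) ≤ S.piecewise w u k + D j k := by
    intro k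
    rw [S.piecewise_eq_of_notMem _ _ hj]
    by_cases hk : k ∈ S
    · rw [S.piecewise_eq_of_mem _ _ hk]
      exact (WithTop.coe_le_coe.mpr (huw j)).trans (hw j k)
    · rw [S.piecewise_eq_of_notMem _ _ hk]
      exact hu j hj k hk
  rw [hvt j hrow, S.piecewise_eq_of_notMem _ _ hj]

end DBM

section Reset

variable {n : ℕ} {D : DBM n} {S : Set (Fin (n + 1))}

theorem resetVal_mem_zone_resetDBM (h0 : (0 : Fin (n + 1)) ∉ S) {v : Fin (n + 1) → ℝ}
    (hv : v ∈ Zone D) : resetVal S v ∈ Zone (resetDBM D S) := by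
  obtain ⟨hv0, hv⟩ := hv
  refine ⟨by simp [resetVal, h0, hv0], fun i j => ?_⟩
  by_cases hi : i ∈ S <;> by_cases hj : j ∈ S
  · simp [resetVal, resetDBM, hi, hj]
  · simpa [resetVal, resetDBM, hi, hj, hv0] using hv 0 j
  · simpa [resetVal, resetDBM, hi, hj, hv0] using hv i 0
  · simpa [resetVal, resetDBM, hi, hj] using hv i j

theorem eq_zero_of_mem_zone_resetDBM (h00 : D 0 0 = 0) (h0 : (0 : Fin (n + 1)) ∉ S)
    {u : Fin (n + 1) → ℝ} (hu : u ∈ Zone (resetDBM D S)) {i : Fin (n + 1)} (hi : i ∈ S) :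
    u i = 0 := by
  obtain ⟨hu0, hu⟩ := (DBM.mem_zone_iff _).mp hu
  have hle : u i ≤ u 0 := by simpa [resetDBM, hi, h0, h00] using hu i 0
  have hge : u 0 ≤ u i := by simpa [resetDBM, hi, h0, h00] using hu 0 i
  rw [le_antisymm hle hge, hu0]

theorem exists_mem_zone_resetVal_eq (hD : Canonical D) (hdiag : ∀ i, D i i = 0)
    (h0 : (0 : Fin (n + 1)) ∉ S) {u : Fin (n + 1) → ℝ} (hu : u ∈ Zone (resetDBM D S)) :
    ∃ v ∈ Zone D, resetVal S v = u := by
  have huS : ∀ j ∉ S, ∀ k ∉ S, (u j : WithTop ℝ) ≤ u k + D j k := fun j hj k hk => by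
    simpa [resetDBM, hj, hk] using ((DBM.mem_zone_iff _).mp hu).2 j k
  obtain ⟨v, hv, hvu⟩ := DBM.exists_satisfies_eqOn_compl hD hdiag huS
  refine ⟨v, (DBM.mem_zone_iff D).mpr ⟨(hvu 0 h0).trans hu.1, hv⟩, funext fun i => ?_⟩
  by_cases hi : i ∈ S
  · simp [resetVal, hi, eq_zero_of_mem_zone_resetDBM (hdiag 0) h0 hu hi]
  · simp [resetVal, hi, hvu i hi]

end Reset

theorem zone_reset_eq_image_general {n : ℕ} (D : DBM n) (hD : Canonical D)
    (hdiag : ∀ i, D i i = 0)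
    (S : Set (Fin (n + 1))) (h0 : (0 : Fin (n + 1)) ∉ S) :
    Zone (resetDBM D S) = (resetVal S) '' (Zone D) :=
  Set.Subset.antisymm (fun _ hu => exists_mem_zone_resetVal_eq hD hdiag h0 hu)
    (Set.image_subset_iff.mpr fun _ hv => resetVal_mem_zone_resetDBM h0 hv)

/-- for a canonical, consistent DBM with zero diagonal, the zone of the
reset matrix `D[S := 0]` is exactly the image of the zone of `D` under resetting the
clocks in `S` to zero. -/
theorem zone_reset_eq_image {n : ℕ} (D : DBM n) (hD : Canonical D)
    (hdiag : ∀ i, D i i = 0) (hne : Zone D ≠ ∅)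
    (S : Set (Fin (n + 1))) (h0 : (0 : Fin (n + 1)) ∉ S) :
    Zone (resetDBM D S) = (resetVal S) '' (Zone D) :=
  zone_reset_eq_image_general D hD hdiag S h0
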